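/- arXiv:1609.00697 — 3 statements merged into one kernel-verified Lean document; each statement's English description precedes it below -/
import Mathlib

section
/- The stochastic Becker–Döring chain with rates q(C, R_i^+ C) = a_i C_1 (C_i - δ_{1,i}) and q(R_i^+ C, C) = b_{i+1} (C_{i+1} + 1) (evaluated at R_i^+ C) satisfies detailed balance with respect to the measure Π(C) = B_M ∏_{i=1}^M Q_i^{C_i} / C_i!: for every configuration C ∈ X_M and every i ≥ 2 with C_1 ≥ 1 and C_i ≥ 1, one has Π(C) · a_i C_1 C_i = Π(R_i^+ C) · b_{i+1} (C_{i+1} + 1). -/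
/-- Detailed balance for the stochastic Becker–Döring chain with respect to the
product-form measure `Π(C) = B_M ∏ Q_i^{C_i}/C_i!`, for a coagulation move
`R_i^+` with `i ≥ 2`. -/
theorem stochastic_becker_doring_detailed_balance
    (M : ℕ) (a b Q : ℕ → ℝ) (BM : ℝ) (hBM : 0 < BM)
    (ha : ∀ i ≥ 1, 0 < a i) (hb : ∀ i ≥ 2, 0 < b i)
    (hQ1 : Q 1 = 1) (hQ : ∀ i ≥ 1, Q (i + 1) = Q i * a i / b (i + 1))
    (C : ℕ → ℕ) (hmass : ∑ j ∈ Finset.Icc 1 M, j * C j = M)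
    (i : ℕ) (hi : 2 ≤ i) (hiM : i + 1 ≤ M)
    (hC1 : 1 ≤ C 1) (hCi : 1 ≤ C i)
    (C' : ℕ → ℕ)
    (hC' : C' = Function.update (Function.update (Function.update C 1 (C 1 - 1))
      i (C i - 1)) (i + 1) (C (i + 1) + 1)) :
    (BM * ∏ j ∈ Finset.Icc 1 M, Q j ^ C j / (Nat.factorial (C j))) *
        (a i * (C 1 : ℝ) * (C i : ℝ)) =
      (BM * ∏ j ∈ Finset.Icc 1 M, Q j ^ C' j / (Nat.factorial (C' j))) *
        (b (i + 1) * ((C (i + 1) : ℝ) + 1)) := by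
  subst hC'
  set s := Finset.Icc 1 M with hs
  have h1s : (1:ℕ) ∈ s := Finset.mem_Icc.mpr ⟨le_refl 1, by omega⟩
  have his : i ∈ s := Finset.mem_Icc.mpr ⟨by omega, by omega⟩
  have hi1s : i+1 ∈ s := Finset.mem_Icc.mpr ⟨by omega, by omega⟩
  have key : ∀ (f : ℕ → ℝ), ∏ j ∈ s, f j =
      f 1 * f i * f (i+1) * ∏ j ∈ ((s.erase 1).erase i).erase (i+1), f j := by
    intro f
    rw [← Finset.mul_prod_erase s f h1s,
        ← Finset.mul_prod_erase _ f (Finset.mem_erase.mpr ⟨by omega, his⟩),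
        ← Finset.mul_prod_erase _ f
          (Finset.mem_erase.mpr ⟨by omega, Finset.mem_erase.mpr ⟨by omega, hi1s⟩⟩)]
    ring
  rw [key, key]
  have hrest : ∏ j ∈ ((s.erase 1).erase i).erase (i+1),
      Q j ^ (Function.update (Function.update (Function.update C 1 (C 1 - 1))
        i (C i - 1)) (i + 1) (C (i + 1) + 1) j) /
        (Nat.factorial (Function.update (Function.update (Function.update C 1 (C 1 - 1))
        i (C i - 1)) (i + 1) (C (i + 1) + 1) j))
      = ∏ j ∈ ((s.erase 1).erase i).erase (i+1), Q j ^ C j / (Nat.factorial (C j)) := by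
    apply Finset.prod_congr rfl
    intro j hj
    simp only [Finset.mem_erase] at hj
    rw [Function.update_of_ne hj.1, Function.update_of_ne hj.2.1,
        Function.update_of_ne hj.2.2.1]
  rw [hrest]
  have e1 : Function.update (Function.update (Function.update C 1 (C 1 - 1))
      i (C i - 1)) (i + 1) (C (i + 1) + 1) 1 = C 1 - 1 := by
    rw [Function.update_of_ne (by omega), Function.update_of_ne (by omega),
        Function.update_self]
  have ei : Function.update (Function.update (Function.update C 1 (C 1 - 1))
      i (C i - 1)) (i + 1) (C (i + 1) + 1) i = C i - 1 := by
    rw [Function.update_of_ne (by omega), Function.update_self]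
  have ei1 : Function.update (Function.update (Function.update C 1 (C 1 - 1))
      i (C i - 1)) (i + 1) (C (i + 1) + 1) (i+1) = C (i + 1) + 1 := by
    rw [Function.update_self]
  rw [e1, ei, ei1]
  obtain ⟨c1, hc1⟩ : ∃ c1, C 1 = c1 + 1 := ⟨C 1 - 1, by omega⟩
  obtain ⟨ci, hci⟩ : ∃ ci, C i = ci + 1 := ⟨C i - 1, by omega⟩
  rw [hc1, hci]
  simp only [Nat.add_sub_cancel, Nat.factorial_succ]
  rw [hQ1, hQ i (by omega)]
  have hbpos := hb (i+1) (by omega)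
  have hf1 : ((Nat.factorial c1 : ℕ) : ℝ) ≠ 0 := Nat.cast_ne_zero.mpr (Nat.factorial_ne_zero _)
  have hfi : ((Nat.factorial ci : ℕ) : ℝ) ≠ 0 := Nat.cast_ne_zero.mpr (Nat.factorial_ne_zero _)
  have hfi1 : ((Nat.factorial (C (i+1)) : ℕ) : ℝ) ≠ 0 :=
    Nat.cast_ne_zero.mpr (Nat.factorial_ne_zero _)
  have hbne : b (i+1) ≠ 0 := ne_of_gt hbpos
  push_cast
  field_simp
  ring_nf
  have hbne' : b (1 + i) ≠ 0 := by rw [add_comm]; exact hbne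
  rw [mul_assoc _ (b (1 + i)), mul_inv_cancel₀ hbne', mul_one]
end

section
/- The detailed balance condition also holds for the monomer–monomer coagulation move: for C ∈ X_M with C_1 ≥ 2, Π(C) · a_1 C_1 (C_1 - 1) = Π(R_1^+ C) · b_2 (C_2 + 1), where R_1^+ C decreases C_1 by 2 and increases C_2 by 1. -/
/-- Detailed balance for the monomer–monomer coagulation move of the stochastic
Becker–Döring chain: `Π(C) a_1 C_1 (C_1 - 1) = Π(R_1^+ C) b_2 (C_2 + 1)`. -/
theorem stochastic_becker_doring_detailed_balance_monomer
    (M : ℕ) (hM : 2 ≤ M) (a b Q : ℕ → ℝ) (BM : ℝ) (hBM : 0 < BM)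
    (ha : ∀ i ≥ 1, 0 < a i) (hb : ∀ i ≥ 2, 0 < b i)
    (hQ1 : Q 1 = 1) (hQ : ∀ i ≥ 1, Q (i + 1) = Q i * a i / b (i + 1))
    (C : ℕ → ℕ) (hmass : ∑ j ∈ Finset.Icc 1 M, j * C j = M)
    (hC1 : 2 ≤ C 1)
    (C' : ℕ → ℕ)
    (hC' : C' = Function.update (Function.update C 1 (C 1 - 2)) 2 (C 2 + 1)) :
    (BM * ∏ j ∈ Finset.Icc 1 M, Q j ^ C j / (Nat.factorial (C j))) *
        (a 1 * (C 1 : ℝ) * ((C 1 : ℝ) - 1)) =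
      (BM * ∏ j ∈ Finset.Icc 1 M, Q j ^ C' j / (Nat.factorial (C' j))) *
        (b 2 * ((C 2 : ℝ) + 1)) := by
  have hC'1 : C' 1 = C 1 - 2 := by simp [hC']
  have hC'2 : C' 2 = C 2 + 1 := by simp [hC']
  have hC'j : ∀ j, j ≠ 1 → j ≠ 2 → C' j = C j := by
    intro j h1 h2
    simp [hC', Function.update_of_ne h2, Function.update_of_ne h1]
  have h1 : (1 : ℕ) ∈ Finset.Icc 1 M := by
    simp [Finset.mem_Icc]; omega
  have h2 : (2 : ℕ) ∈ (Finset.Icc 1 M).erase 1 := by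
    simp [Finset.mem_Icc]; omega
  set s := ((Finset.Icc 1 M).erase 1).erase 2 with hs
  have hsplit : ∀ D : ℕ → ℕ,
      (∏ j ∈ Finset.Icc 1 M, Q j ^ D j / (Nat.factorial (D j))) =
      (Q 1 ^ D 1 / (Nat.factorial (D 1))) * ((Q 2 ^ D 2 / (Nat.factorial (D 2))) *
        ∏ j ∈ s, Q j ^ D j / (Nat.factorial (D j))) := by
    intro D
    rw [← Finset.mul_prod_erase _ _ h1, ← Finset.mul_prod_erase _ _ h2]
  have hrest : (∏ j ∈ s, Q j ^ C' j / (Nat.factorial (C' j))) =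
      ∏ j ∈ s, Q j ^ C j / (Nat.factorial (C j)) := by
    apply Finset.prod_congr rfl
    intro j hj
    have hj1 : j ≠ 1 := Finset.ne_of_mem_erase (Finset.mem_of_mem_erase hj)
    have hj2 : j ≠ 2 := Finset.ne_of_mem_erase hj
    rw [hC'j j hj1 hj2]
  rw [hsplit C, hsplit C', hrest, hC'1, hC'2]
  obtain ⟨n, hn⟩ : ∃ n, C 1 = n + 2 := ⟨C 1 - 2, by omega⟩
  have hQ2 : Q 2 = a 1 / b 2 := by
    have := hQ 1 le_rfl
    rw [hQ1] at this
    simpa using this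
  have hfac1 : (Nat.factorial (C 1) : ℝ) = (n + 2) * (n + 1) * Nat.factorial n := by
    rw [hn]
    push_cast [Nat.factorial_succ]
    ring
  have hfac2 : (Nat.factorial (C 2 + 1) : ℝ) = (C 2 + 1) * Nat.factorial (C 2) := by
    push_cast [Nat.factorial_succ]
    ring
  have hn' : C 1 - 2 = n := by omega
  have hcast : (C 1 : ℝ) = n + 2 := by rw [hn]; push_cast; ring
  have hb2 : (0 : ℝ) < b 2 := hb 2 le_rfl
  have hf0 : (Nat.factorial n : ℝ) ≠ 0 := by positivity
  have hf2 : (Nat.factorial (C 2) : ℝ) ≠ 0 := by positivity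
  rw [hn', hfac1, hfac2, hcast, hQ1, hQ2]
  have hnn : (0:ℝ) < (n:ℝ) + 1 := by positivity
  field_simp
  have hba : b 2 * (a 1 / b 2) = a 1 := mul_div_cancel₀ _ hb2.ne'
  linear_combination (-((n:ℝ) + 1) * (∏ x ∈ s, Q x ^ C x / (Nat.factorial (C x) : ℝ)) * (a 1 / b 2) ^ C 2) * hba
end

section
/- Under the product-form stationary distribution Π(C) = B_M ∏_{j=1}^M Q_j^{C_j}/C_j! on partitions of M, the expected number of clusters of size i satisfies E_Π[C_i] = Q_i · B_M / B_{M-i}, for 1 ≤ i ≤ M, where B_K^{-1} = ∑_{C ∈ X_K} ∏_j Q_j^{C_j}/C_j! (with B_0 = 1). -/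
/-- `invB Q K = B_K⁻¹` is the partition-sum normalizing constant of the Becker–Döring
stationary distribution. -/
noncomputable def invB (Q : ℕ → ℝ) (K : ℕ) : ℝ :=
  ∑ P : Nat.Partition K, ∏ j ∈ Finset.Icc 1 K,
    Q j ^ (Multiset.count j P.parts) / (Nat.factorial (Multiset.count j P.parts))

/-- Remove one part of size `i` from a partition of `M`, obtaining a partition of `M - i`. -/
def erasePart {M i : ℕ} (P : Nat.Partition M) (h : i ∈ P.parts) : Nat.Partition (M - i) where
  parts := P.parts.erase i
  parts_pos := fun {a} ha => P.parts_pos (Multiset.mem_of_mem_erase ha)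
  parts_sum := by
    have h1 := Multiset.cons_erase h
    have h2 : (i ::ₘ P.parts.erase i).sum = M := by rw [h1, P.parts_sum]
    rw [Multiset.sum_cons] at h2
    omega

/-- Add one part of size `i` to a partition of `M - i`, obtaining a partition of `M`. -/
def consPart {M i : ℕ} (hi : 1 ≤ i) (hiM : i ≤ M) (P' : Nat.Partition (M - i)) :
    Nat.Partition M where
  parts := i ::ₘ P'.parts
  parts_pos := fun {a} ha => by
    rcases Multiset.mem_cons.mp ha with h | h
    · omega
    · exact P'.parts_pos h
  parts_sum := by rw [Multiset.sum_cons, P'.parts_sum]; omega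

lemma count_eq_zero_of_gt {K j : ℕ} (P : Nat.Partition K) (h : K < j) :
    Multiset.count j P.parts = 0 := by
  rw [Multiset.count_eq_zero]
  intro hm
  have := Multiset.single_le_sum (fun x _ => Nat.zero_le x) j hm
  rw [P.parts_sum] at this
  omega

lemma key_sum (M : ℕ) (Q : ℕ → ℝ) (i : ℕ) (hi : 1 ≤ i) (hiM : i ≤ M) :
    ∑ P : Nat.Partition M, (Multiset.count i P.parts : ℝ) *
        ∏ j ∈ Finset.Icc 1 M,
          Q j ^ (Multiset.count j P.parts) / (Nat.factorial (Multiset.count j P.parts)) =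
      Q i * invB Q (M - i) := by
  classical
  -- restrict to partitions containing a part of size i
  rw [← Finset.sum_filter_of_ne (p := fun P : Nat.Partition M => i ∈ P.parts)
      (by
        intro P _ hne
        by_contra hmem
        rw [← Multiset.count_pos, Nat.pos_iff_ne_zero, not_not] at hmem
        rw [hmem] at hne
        simp at hne)]
  have hiIcc : i ∈ Finset.Icc 1 M := Finset.mem_Icc.mpr ⟨hi, hiM⟩
  rw [invB, Finset.mul_sum]
  refine Finset.sum_bij'
    (i := fun P hP => erasePart P (by simpa using (Finset.mem_filter.mp hP).2))
    (j := fun P' _ => consPart hi hiM P')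
    (fun P hP => Finset.mem_univ _)
    (fun P' _ => by
      simp only [Finset.mem_filter, Finset.mem_univ, true_and, consPart]
      exact Multiset.mem_cons_self _ _)
    (fun P hP => by
      have hmem : i ∈ P.parts := by simpa using (Finset.mem_filter.mp hP).2
      apply Nat.Partition.ext
      simp only [consPart, erasePart]
      exact Multiset.cons_erase hmem)
    (fun P' _ => by
      apply Nat.Partition.ext
      simp only [consPart, erasePart]
      exact Multiset.erase_cons_head _ _)
    ?_
  -- the term identity
  intro P hP
  have hmem : i ∈ P.parts := by simpa using (Finset.mem_filter.mp hP).2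
  set c : ℕ := Multiset.count i P.parts with hc
  have hcpos : 1 ≤ c := by rwa [hc, Nat.one_le_iff_ne_zero, Ne, Multiset.count_eq_zero, not_not]
  have hcount : ∀ j, Multiset.count j (P.parts.erase i) =
      if j = i then c - 1 else Multiset.count j P.parts := by
    intro j
    by_cases h : j = i
    · subst h; simp [hc]
    · rw [if_neg h, Multiset.count_erase_of_ne h]
  show (c : ℝ) * ∏ j ∈ Finset.Icc 1 M,
      Q j ^ (Multiset.count j P.parts) / (Nat.factorial (Multiset.count j P.parts)) =
    Q i * ∏ j ∈ Finset.Icc 1 (M - i),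
      Q j ^ (Multiset.count j (erasePart P hmem).parts) /
        (Nat.factorial (Multiset.count j (erasePart P hmem).parts))
  -- extend the RHS product from Icc 1 (M-i) to Icc 1 M
  have hext : ∏ j ∈ Finset.Icc 1 (M - i),
      Q j ^ (Multiset.count j (erasePart P hmem).parts) /
        (Nat.factorial (Multiset.count j (erasePart P hmem).parts)) =
      ∏ j ∈ Finset.Icc 1 M,
      Q j ^ (Multiset.count j (erasePart P hmem).parts) /
        (Nat.factorial (Multiset.count j (erasePart P hmem).parts)) := by
    refine Finset.prod_subset (Finset.Icc_subset_Icc_right (by omega)) ?_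
    intro j hjM hj
    have hjgt : M - i < j := by
      simp only [Finset.mem_Icc] at hjM hj
      omega
    rw [count_eq_zero_of_gt (erasePart P hmem) hjgt]
    simp
  have heq : (erasePart P hmem).parts = P.parts.erase i := rfl
  rw [hext]
  -- now split off the i factor on both sides
  rw [← Finset.mul_prod_erase _ _ hiIcc, ← Finset.mul_prod_erase
    (f := fun j => Q j ^ (Multiset.count j (erasePart P hmem).parts) /
        (Nat.factorial (Multiset.count j (erasePart P hmem).parts))) _ hiIcc]
  have hprods : ∏ j ∈ (Finset.Icc 1 M).erase i,
      Q j ^ (Multiset.count j P.parts) / (Nat.factorial (Multiset.count j P.parts)) =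
      ∏ j ∈ (Finset.Icc 1 M).erase i,
      Q j ^ (Multiset.count j (erasePart P hmem).parts) /
        (Nat.factorial (Multiset.count j (erasePart P hmem).parts)) := by
    refine Finset.prod_congr rfl fun j hj => ?_
    rw [heq, hcount j, if_neg (Finset.ne_of_mem_erase hj)]
  rw [hprods, heq, hcount i, if_pos rfl]
  rw [← mul_assoc, ← mul_assoc]
  congr 1
  -- c * (Q i ^ c / c!) = Q i * (Q i ^ (c-1) / (c-1)!)
  obtain ⟨d, hd⟩ : ∃ d, c = d + 1 := ⟨c - 1, by omega⟩
  have hd' : Multiset.count i P.parts = d + 1 := by rw [← hc]; exact hd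
  rw [hd, hd']
  simp only [Nat.add_sub_cancel]
  rw [Nat.factorial_succ, pow_succ]
  have hdne : (Nat.factorial d : ℝ) ≠ 0 := Nat.cast_ne_zero.mpr (Nat.factorial_ne_zero d)
  push_cast
  field_simp

/-- Under the product-form stationary distribution `Π`, the expected number of clusters
of size `i` equals `Q_i B_M / B_{M-i}`. -/
theorem expected_cluster_number
    (M : ℕ) (Q : ℕ → ℝ) (hQ : ∀ j, 0 < Q j)
    (i : ℕ) (hi : 1 ≤ i) (hiM : i ≤ M)
    (BM BMi : ℝ) (hBM : BM = (invB Q M)⁻¹) (hBMi : BMi = (invB Q (M - i))⁻¹) :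
    ∑ P : Nat.Partition M, (Multiset.count i P.parts : ℝ) *
        (BM * ∏ j ∈ Finset.Icc 1 M,
          Q j ^ (Multiset.count j P.parts) / (Nat.factorial (Multiset.count j P.parts))) =
      Q i * BM / BMi := by
  have key := key_sum M Q i hi hiM
  calc ∑ P : Nat.Partition M, (Multiset.count i P.parts : ℝ) *
        (BM * ∏ j ∈ Finset.Icc 1 M,
          Q j ^ (Multiset.count j P.parts) / (Nat.factorial (Multiset.count j P.parts)))
      = BM * ∑ P : Nat.Partition M, (Multiset.count i P.parts : ℝ) *
        ∏ j ∈ Finset.Icc 1 M,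
          Q j ^ (Multiset.count j P.parts) / (Nat.factorial (Multiset.count j P.parts)) := by
        rw [Finset.mul_sum]; exact Finset.sum_congr rfl fun P _ => by ring
    _ = BM * (Q i * invB Q (M - i)) := by rw [key]
    _ = Q i * BM / BMi := by
        rw [hBMi, div_eq_mul_inv, inv_inv]; ring
end
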